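/- Let E be a discrete space of cardinality 2^ω and X = E ∪ {p} its one-point Lindelöfication. Then Bob has a winning strategy in the long tightness game G_1^{ω₁}(Ω_p, Ω_p): at each inning he picks a point of Alice's set not previously chosen, which is possible because every member of Ω_p is uncountable, and at the end his uncountably many chosen points have p in their closure. -/

import Mathlib

universe u

open Topology Set

/-- The one-point Lindelöfication of the discrete space `E`: the extra point is `none`,
every point of `E` is isolated, and a set containing `none` is open iff its complement in
`E` is countable. -/
instance lindelofication (E : Type u) : TopologicalSpace (Option E) where
  IsOpen U := none ∈ U → {e : E | some e ∉ U}.Countable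
  isOpen_univ := by
    intro _
    convert Set.countable_empty
    simp
  isOpen_inter := by
    intro U V hU hV h
    refine ((hU h.1).union (hV h.2)).mono ?_
    intro e he
    simp only [Set.mem_setOf_eq, Set.mem_inter_iff, not_and_or] at he
    simpa using he
  isOpen_sUnion := by
    intro S hS h
    obtain ⟨s, hs, hns⟩ := h
    refine (hS s hs hns).mono ?_
    intro e he hs'
    exact he ⟨s, hs, hs'⟩

universe v

open Topology

/-- A strategy for Bob in the tightness game `G_1^κ(Ω_p, Ω_p)`: at inning `ξ < κ`, given the
history of Alice's previous moves and Alice's current set `A` (with `p ∈ closure A`),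
Bob picks a point of `A`. -/
structure BobStratOne (X : Type u) [TopologicalSpace X] (p : X) (κ : Ordinal.{v}) where
  move : ∀ ξ : Ordinal.{v}, ξ < κ → (∀ α : Ordinal.{v}, α < ξ → Set X) → Set X → X
  mem : ∀ ξ hξ hist A, p ∈ closure A → move ξ hξ hist A ∈ A

/-- The strategy is winning: for every play by Alice of sets having `p` in their closure,
the set of Bob's chosen points has `p` in its closure. -/
def BobStratOne.Winning {X : Type u} [TopologicalSpace X] {p : X} {κ : Ordinal.{v}}
    (S : BobStratOne X p κ) : Prop :=
  ∀ f : ∀ ξ : Ordinal.{v}, ξ < κ → Set X, (∀ ξ hξ, p ∈ closure (f ξ hξ)) →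
    p ∈ closure {x | ∃ (ξ : Ordinal.{v}) (hξ : ξ < κ),
      S.move ξ hξ (fun α hα => f α (hα.trans hξ)) (f ξ hξ) = x}

/-!
At every inning Bob picks a point of Alice's set that he has not picked before, if there is
one. If at some inning there is none, Alice's set lies inside Bob's picks, so `p` is already in
the closure of his picks. Otherwise his `κ` picks are pairwise distinct, which wins as soon as
every set of size `|κ|` has `p` in its closure; in the Lindelöfication every uncountable set
has `none` in its closure.
-/

open Cardinal

theorem none_mem_closure_of_not_countable {E : Type u} {A : Set (Option E)}
    (hA : ¬ A.Countable) : none ∈ closure A := by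
  rw [mem_closure_iff]
  intro U hU hnone
  by_contra hdisj
  refine hA ((((hU hnone).image some).insert none).mono ?_)
  rintro (_ | e) he
  · exact mem_insert _ _
  · exact mem_insert_of_mem _ ⟨e, fun heU => hdisj ⟨some e, heU, he⟩, rfl⟩

theorem lift_card_le_mk_range_of_injective {X : Type u} {κ : Ordinal.{v}} {f : Iio κ → X}
    (hf : Function.Injective f) :
    lift.{u} κ.card ≤ lift.{v} #(range f) := by
  have h := mk_range_eq_of_injective hf
  rw [mk_Iio_ordinal, lift_lift] at h
  rw [← lift_le.{v + 1}, lift_lift, lift_lift]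
  exact h.ge

namespace BobStratOne

variable {X : Type u} [TopologicalSpace X] {p : X} {κ : Ordinal.{v}}

def play (S : BobStratOne X p κ) (f : ∀ ξ < κ, Set X) (ξ : Iio κ) : X :=
  S.move ξ.1 ξ.2 (fun α hα => f α (hα.trans ξ.2)) (f ξ.1 ξ.2)

theorem winning_iff (S : BobStratOne X p κ) :
    S.Winning ↔ ∀ f : ∀ ξ < κ, Set X, (∀ ξ hξ, p ∈ closure (f ξ hξ)) →
      p ∈ closure (range (S.play f)) := by
  have hrange : ∀ f : ∀ ξ < κ, Set X,
      {x | ∃ ξ hξ, S.move ξ hξ (fun α hα => f α (hα.trans hξ)) (f ξ hξ) = x} =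
        range (S.play f) := fun f =>
    ext fun _ => ⟨fun ⟨ξ, hξ, h⟩ => ⟨⟨ξ, hξ⟩, h⟩, fun ⟨ξ, h⟩ => ⟨ξ.1, ξ.2, h⟩⟩
  simp only [Winning, hrange]

end BobStratOne

section FreshStrategy

variable {X : Type u}

open Classical in
noncomputable def pickAvoiding (p : X) (A P : Set X) : X :=
  haveI : Nonempty X := ⟨p⟩
  if (A \ P).Nonempty then Classical.epsilon (· ∈ A \ P) else Classical.epsilon (· ∈ A)

theorem pickAvoiding_mem (p : X) {A : Set X} (P : Set X) (hA : A.Nonempty) :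
    pickAvoiding p A P ∈ A := by
  unfold pickAvoiding
  split_ifs with h
  · exact (Classical.epsilon_spec h).1
  · exact Classical.epsilon_spec hA

theorem pickAvoiding_notMem (p : X) {A P : Set X} (h : (A \ P).Nonempty) :
    pickAvoiding p A P ∉ P := by
  unfold pickAvoiding
  rw [if_pos h]
  exact (Classical.epsilon_spec h).2

noncomputable def freshMove (p : X) (ξ : Ordinal.{v}) (hist : ∀ α < ξ, Set X) (A : Set X) : X :=
  pickAvoiding p A
    {x | ∃ α, ∃ hα : α < ξ, freshMove p α (fun β hβ => hist β (hβ.trans hα)) (hist α hα) = x}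
termination_by ξ
decreasing_by exact hα

def freshPicks (p : X) (ξ : Ordinal.{v}) (hist : ∀ α < ξ, Set X) : Set X :=
  {x | ∃ α, ∃ hα : α < ξ, freshMove p α (fun β hβ => hist β (hβ.trans hα)) (hist α hα) = x}

theorem freshMove_eq (p : X) (ξ : Ordinal.{v}) (hist : ∀ α < ξ, Set X) (A : Set X) :
    freshMove p ξ hist A = pickAvoiding p A (freshPicks p ξ hist) := by
  rw [freshMove]
  rfl

variable [TopologicalSpace X] (p : X) (κ : Ordinal.{v})

noncomputable def freshStrategy : BobStratOne X p κ where
  move ξ _ hist A := freshMove p ξ hist A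
  mem ξ _ hist A hA := by
    rw [freshMove_eq]
    exact pickAvoiding_mem p _ (closure_nonempty_iff.1 ⟨p, hA⟩)

variable {p κ}

theorem freshPicks_subset_range_play (f : ∀ ξ < κ, Set X) (ξ : Iio κ) :
    freshPicks p ξ.1 (fun α hα => f α (hα.trans ξ.2)) ⊆ range ((freshStrategy p κ).play f) := by
  rintro _ ⟨α, hα, rfl⟩
  exact ⟨⟨α, hα.trans ξ.2⟩, rfl⟩

theorem play_mem_freshPicks (f : ∀ ξ < κ, Set X) {α ξ : Iio κ} (hαξ : α < ξ) :
    (freshStrategy p κ).play f α ∈ freshPicks p ξ.1 (fun β hβ => f β (hβ.trans ξ.2)) :=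
  ⟨α.1, hαξ, rfl⟩

theorem injective_play_freshStrategy (f : ∀ ξ < κ, Set X)
    (hfresh : ∀ ξ : Iio κ,
      (f ξ.1 ξ.2 \ freshPicks p ξ.1 (fun α hα => f α (hα.trans ξ.2))).Nonempty) :
    Function.Injective ((freshStrategy p κ).play f) := by
  have hne : ∀ α ξ : Iio κ, α < ξ →
      (freshStrategy p κ).play f α ≠ (freshStrategy p κ).play f ξ := fun α ξ hαξ heq => by
    have hnot := pickAvoiding_notMem p (hfresh ξ)
    rw [← freshMove_eq] at hnot
    have hmem :
        (freshStrategy p κ).play f ξ ∈ freshPicks p ξ.1 (fun β hβ => f β (hβ.trans ξ.2)) :=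
      heq ▸ play_mem_freshPicks f hαξ
    exact hnot hmem
  exact Function.Injective.of_lt_imp_ne hne

theorem freshStrategy_winning
    (hκ : ∀ A : Set X, lift.{u} κ.card ≤ lift.{v} #A → p ∈ closure A) :
    (freshStrategy p κ).Winning := by
  rw [BobStratOne.winning_iff]
  intro f hf
  by_cases hfresh : ∀ ξ : Iio κ,
      (f ξ.1 ξ.2 \ freshPicks p ξ.1 (fun α hα => f α (hα.trans ξ.2))).Nonempty
  · exact hκ _ (lift_card_le_mk_range_of_injective (injective_play_freshStrategy f hfresh))
  · push Not at hfresh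
    obtain ⟨ξ, hcovered⟩ := hfresh
    rw [sdiff_eq_empty] at hcovered
    exact closure_mono (hcovered.trans (freshPicks_subset_range_play f ξ)) (hf ξ.1 ξ.2)

end FreshStrategy

theorem bob_winning_lindelofication_general (E : Type u) :
    ∃ S : BobStratOne.{u, u} (Option E) none (Cardinal.aleph 1).ord, S.Winning := by
  refine ⟨freshStrategy none _, freshStrategy_winning fun A hA => ?_⟩
  refine none_mem_closure_of_not_countable fun hcount => ?_
  rw [lift_id, lift_id, card_ord, aleph_one_le_iff] at hA
  exact hA.not_ge (le_aleph0_iff_set_countable.2 hcount)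

/-- In the one-point Lindelöfication `X = E ∪ {p}` of a discrete space of cardinality `2^ω`,
Bob has a winning strategy in the long tightness game `G_1^{ω₁}(Ω_p, Ω_p)`. -/
theorem bob_winning_lindelofication (E : Type u)
    (hE : Cardinal.mk E = Cardinal.continuum.{u}) :
    ∃ S : BobStratOne.{u, u} (Option E) none (Cardinal.aleph 1).ord, S.Winning :=
  bob_winning_lindelofication_general E
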